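/- Let d ≥ 2 be an integer and β > 0. Define ψ(y) = 2(d − 2) e^{β(1+y)} / (e^{2β} + e^{2βy}) and the scale density s(x) = (1 − x²)^{−1/2} · exp( − ∫_0^x ψ(y)/(1 − y²) dy ) for x ∈ (−1, 1). Then there exist constants 0 < c ≤ C and ε₀ ∈ (0, 1) such that for all ε ∈ (0, ε₀): c · ε^{(d−3)/2} ≤ s(1 − ε) ≤ C · ε^{(d−3)/2}. -/

import Mathlib

open Real

/-- `ψ(y) = 2(d−2)e^{β(1+y)} / (e^{2β} + e^{2βy})`. -/
noncomputable def psi (d : ℕ) (β y : ℝ) : ℝ :=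
  2 * ((d : ℝ) - 2) * exp (β * (1 + y)) / (exp (2 * β) + exp (2 * β * y))

/-- Scale density `s(x) = (1 − x²)^{−1/2} exp(−∫₀ˣ ψ(y)/(1 − y²) dy)` of the
two-token overlap diffusion. -/
noncomputable def scaleDensity (d : ℕ) (β x : ℝ) : ℝ :=
  (1 - x ^ 2) ^ (-(1 / 2 : ℝ)) * exp (-∫ y in (0 : ℝ)..x, psi d β y / (1 - y ^ 2))

private lemma rpow_neg_anti' {x y q : ℝ} (hx : 0 < x) (hxy : x ≤ y) (hq : 0 ≤ q) :
    y ^ (-q) ≤ x ^ (-q) := by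
  rw [Real.rpow_neg hx.le, Real.rpow_neg (hx.trans_le hxy).le]
  exact inv_anti₀ (Real.rpow_pos_of_pos hx q) (Real.rpow_le_rpow hx.le hxy hq)

set_option maxHeartbeats 1000000 in
private lemma integral_decomp (d : ℕ) (hd : 2 ≤ d) (β : ℝ) (hβ : 0 < β)
    (ε : ℝ) (hε : 0 < ε) (hε2 : ε < 1/2) :
    ∃ H : ℝ, |H| ≤ ((d:ℝ) - 2) * β ^ 2 ∧
      (∫ y in (0:ℝ)..(1 - ε), psi d β y / (1 - y ^ 2))
        = ((d:ℝ) - 2) / 2 * (Real.log (2 - ε) - Real.log ε) + H := by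
  have hd2 : (0:ℝ) ≤ (d:ℝ) - 2 := by
    have : (2:ℝ) ≤ (d:ℝ) := by exact_mod_cast hd
    linarith
  have hb0 : (0:ℝ) < 1 - ε := by linarith
  have hb1 : (1:ℝ) - ε < 1 := by linarith
  have huIcc : Set.uIcc (0:ℝ) (1 - ε) = Set.Icc 0 (1 - ε) := Set.uIcc_of_le hb0.le
  have hpos : ∀ y ∈ Set.Icc (0:ℝ) (1 - ε), 0 < 1 - y ^ 2 := by
    intro y hy
    nlinarith [hy.1, hy.2]
  -- continuity and integrability
  have hcpsi : Continuous (psi d β) := by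
    unfold psi
    apply Continuous.div (by fun_prop) (by fun_prop)
    intro y; positivity
  have hcg : ContinuousOn (fun y => psi d β y / (1 - y ^ 2)) (Set.Icc (0:ℝ) (1 - ε)) := by
    apply ContinuousOn.div hcpsi.continuousOn (by fun_prop)
    intro y hy; exact (hpos y hy).ne'
  have hcbase : ContinuousOn (fun y : ℝ => ((d:ℝ) - 2) / (1 - y ^ 2)) (Set.Icc (0:ℝ) (1 - ε)) := by
    apply ContinuousOn.div continuousOn_const (by fun_prop)
    intro y hy; exact (hpos y hy).ne'
  have hint_g : IntervalIntegrable (fun y => psi d β y / (1 - y ^ 2))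
      MeasureTheory.volume 0 (1 - ε) := by
    apply ContinuousOn.intervalIntegrable; rw [huIcc]; exact hcg
  have hbase_int : IntervalIntegrable (fun y : ℝ => ((d:ℝ) - 2) / (1 - y ^ 2))
      MeasureTheory.volume 0 (1 - ε) := by
    apply ContinuousOn.intervalIntegrable; rw [huIcc]; exact hcbase
  have hh_int : IntervalIntegrable
      (fun y => psi d β y / (1 - y ^ 2) - ((d:ℝ) - 2) / (1 - y ^ 2))
      MeasureTheory.volume 0 (1 - ε) := hint_g.sub hbase_int
  -- FTC for the base part
  have hF : ∀ y ∈ Set.uIcc (0:ℝ) (1 - ε),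
      HasDerivAt (fun y => ((d:ℝ) - 2) / 2 * (Real.log (1 + y) - Real.log (1 - y)))
        (((d:ℝ) - 2) / (1 - y ^ 2)) y := by
    intro y hy
    rw [huIcc] at hy
    have h1 : (0:ℝ) < 1 + y := by linarith [hy.1]
    have h2 : (0:ℝ) < 1 - y := by linarith [hy.2]
    have hden : (1:ℝ) - y ^ 2 ≠ 0 := by nlinarith
    have hlog1 : HasDerivAt (fun y : ℝ => Real.log (1 + y)) (1 / (1 + y)) y := by
      simpa using ((hasDerivAt_id y).const_add 1).log h1.ne'
    have hlog2 : HasDerivAt (fun y : ℝ => Real.log (1 - y)) (-1 / (1 - y)) y := by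
      simpa using ((hasDerivAt_id y).const_sub 1).log h2.ne'
    have hder := (hlog1.sub hlog2).const_mul (((d:ℝ) - 2) / 2)
    refine hder.congr_deriv ?_
    have h1' := h1.ne'
    have h2' := h2.ne'
    field_simp
    ring
  have hFTC : (∫ y in (0:ℝ)..(1 - ε), ((d:ℝ) - 2) / (1 - y ^ 2))
      = ((d:ℝ) - 2) / 2 * (Real.log (2 - ε) - Real.log ε) := by
    rw [intervalIntegral.integral_eq_sub_of_hasDerivAt hF hbase_int]
    have e1 : (1:ℝ) + (1 - ε) = 2 - ε := by ring
    have e2 : (1:ℝ) - (1 - ε) = ε := by ring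
    simp only [e1, e2, add_zero, sub_zero, Real.log_one]
    ring
  -- split the integral
  have hsplit : (∫ y in (0:ℝ)..(1 - ε), psi d β y / (1 - y ^ 2))
      = (∫ y in (0:ℝ)..(1 - ε), ((d:ℝ) - 2) / (1 - y ^ 2))
        + ∫ y in (0:ℝ)..(1 - ε), (psi d β y / (1 - y ^ 2) - ((d:ℝ) - 2) / (1 - y ^ 2)) := by
    rw [← intervalIntegral.integral_add hbase_int hh_int]
    congr 1
    funext y
    ring
  -- bound on the remainder
  have hHbound : |∫ y in (0:ℝ)..(1 - ε),
      (psi d β y / (1 - y ^ 2) - ((d:ℝ) - 2) / (1 - y ^ 2))| ≤ ((d:ℝ) - 2) * β ^ 2 := by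
    have key : ∀ y ∈ Set.uIoc (0:ℝ) (1 - ε),
        ‖psi d β y / (1 - y ^ 2) - ((d:ℝ) - 2) / (1 - y ^ 2)‖ ≤ ((d:ℝ) - 2) * β ^ 2 := by
      intro y hy
      rw [Set.uIoc_of_le hb0.le] at hy
      have hy0 : 0 < y := hy.1
      have hy1 : y < 1 := lt_of_le_of_lt hy.2 hb1
      have h1y : 0 < 1 - y := by linarith
      have hden : 0 < 1 - y ^ 2 := by nlinarith
      set A : ℝ := Real.exp β with hA
      set B : ℝ := Real.exp (β * y) with hB
      have hApos : 0 < A := Real.exp_pos _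
      have hBpos : 0 < B := Real.exp_pos _
      have hBA : B ≤ A := by
        rw [hA, hB]; apply Real.exp_le_exp.mpr; nlinarith
      have hexp2 : Real.exp (2 * β) = A ^ 2 := by
        rw [hA, sq, ← Real.exp_add]; congr 1; ring
      have hexp2y : Real.exp (2 * β * y) = B ^ 2 := by
        rw [hB, sq, ← Real.exp_add]; congr 1; ring
      have hexp1y : Real.exp (β * (1 + y)) = A * B := by
        rw [hA, hB, ← Real.exp_add]; congr 1; ring
      have hABpos : 0 < A ^ 2 + B ^ 2 := by positivity
      have hpsi_eq : psi d β y - ((d:ℝ) - 2)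
          = -(((d:ℝ) - 2) * (A - B) ^ 2) / (A ^ 2 + B ^ 2) := by
        unfold psi
        rw [hexp2, hexp2y, hexp1y]
        field_simp
        ring
      have hAB : A - B ≤ A * (β * (1 - y)) := by
        have hBe : B = A * Real.exp (-(β * (1 - y))) := by
          rw [hA, hB, ← Real.exp_add]; congr 1; ring
        have h5 := mul_le_mul_of_nonneg_left (Real.add_one_le_exp (-(β * (1 - y)))) hApos.le
        rw [← hBe] at h5
        nlinarith [h5]
      have hABnn : 0 ≤ A * (β * (1 - y)) :=
        mul_nonneg hApos.le (mul_nonneg hβ.le h1y.le)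
      have h1sq : (A - B) ^ 2 ≤ (A * (β * (1 - y))) ^ 2 := by
        apply sq_le_sq' (by linarith) hAB
      have hval : psi d β y / (1 - y ^ 2) - ((d:ℝ) - 2) / (1 - y ^ 2)
          = -(((d:ℝ) - 2) * (A - B) ^ 2) / (A ^ 2 + B ^ 2) / (1 - y ^ 2) := by
        rw [div_sub_div_same, hpsi_eq]
      rw [Real.norm_eq_abs, hval, abs_div, abs_div, abs_neg,
        abs_of_nonneg (mul_nonneg hd2 (sq_nonneg (A - B))),
        abs_of_pos hABpos, abs_of_pos hden, div_div,
        div_le_iff₀ (by positivity : (0:ℝ) < (A ^ 2 + B ^ 2) * (1 - y ^ 2))]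
      have s1 : ((d:ℝ) - 2) * (A - B) ^ 2 ≤ ((d:ℝ) - 2) * (A * (β * (1 - y))) ^ 2 :=
        mul_le_mul_of_nonneg_left h1sq hd2
      have s2 : A ^ 2 * (1 - y) ^ 2 ≤ (A ^ 2 + B ^ 2) * (1 - y ^ 2) := by
        nlinarith [mul_nonneg (sq_nonneg A) (mul_nonneg hy0.le h1y.le),
          mul_nonneg (sq_nonneg B) hden.le]
      have s3 : ((d:ℝ) - 2) * (A * (β * (1 - y))) ^ 2
          ≤ ((d:ℝ) - 2) * β ^ 2 * ((A ^ 2 + B ^ 2) * (1 - y ^ 2)) := by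
        have s4 := mul_le_mul_of_nonneg_left s2 (mul_nonneg hd2 (sq_nonneg β))
        calc ((d:ℝ) - 2) * (A * (β * (1 - y))) ^ 2
            = ((d:ℝ) - 2) * β ^ 2 * (A ^ 2 * (1 - y) ^ 2) := by ring
          _ ≤ ((d:ℝ) - 2) * β ^ 2 * ((A ^ 2 + B ^ 2) * (1 - y ^ 2)) := s4
      linarith
    have := intervalIntegral.norm_integral_le_of_norm_le_const key
    rw [Real.norm_eq_abs] at this
    have habs : |(1 - ε) - 0| = 1 - ε := by rw [sub_zero, abs_of_pos hb0]
    rw [habs] at this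
    calc |∫ y in (0:ℝ)..(1 - ε), (psi d β y / (1 - y ^ 2) - ((d:ℝ) - 2) / (1 - y ^ 2))|
        ≤ ((d:ℝ) - 2) * β ^ 2 * (1 - ε) := this
      _ ≤ ((d:ℝ) - 2) * β ^ 2 := by nlinarith [mul_nonneg hd2 (sq_nonneg β)]
  exact ⟨_, hHbound, by rw [hsplit, hFTC]⟩

/-- Right-boundary asymptotics of the scale density: `s(1 − ε) ≍ ε^{(d−3)/2}`. -/
theorem scale_density_right_asymptotics (d : ℕ) (hd : 2 ≤ d) (β : ℝ) (hβ : 0 < β) :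
    ∃ c C : ℝ, 0 < c ∧ c ≤ C ∧ ∃ ε₀ : ℝ, 0 < ε₀ ∧ ε₀ < 1 ∧
      ∀ ε : ℝ, 0 < ε → ε < ε₀ →
        c * ε ^ ((((d : ℝ) - 3) / 2)) ≤ scaleDensity d β (1 - ε) ∧
        scaleDensity d β (1 - ε) ≤ C * ε ^ ((((d : ℝ) - 3) / 2)) := by
  have hd2 : (0:ℝ) ≤ (d:ℝ) - 2 := by
    have : (2:ℝ) ≤ (d:ℝ) := by exact_mod_cast hd
    linarith
  set α : ℝ := ((d:ℝ) - 2) / 2 with hα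
  have hα0 : 0 ≤ α := by rw [hα]; positivity
  set M : ℝ := ((d:ℝ) - 2) * β ^ 2 with hM
  have hM0 : 0 ≤ M := mul_nonneg hd2 (sq_nonneg β)
  refine ⟨(2:ℝ) ^ (-(1/2:ℝ)) * (2:ℝ) ^ (-α) * Real.exp (-M),
      (3/2:ℝ) ^ (-(1/2:ℝ)) * (3/2:ℝ) ^ (-α) * Real.exp M, by positivity, ?_,
      1/2, by norm_num, by norm_num, ?_⟩
  · have e1 : Real.exp (-M) ≤ Real.exp M := Real.exp_le_exp.mpr (by linarith)
    have e2 : (2:ℝ) ^ (-(1/2:ℝ)) ≤ (3/2:ℝ) ^ (-(1/2:ℝ)) :=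
      rpow_neg_anti' (by norm_num) (by norm_num) (by norm_num)
    have e3 : (2:ℝ) ^ (-α) ≤ (3/2:ℝ) ^ (-α) :=
      rpow_neg_anti' (by norm_num) (by norm_num) hα0
    apply mul_le_mul (mul_le_mul e2 e3 (by positivity) (by positivity)) e1
      (Real.exp_pos _).le (by positivity)
  · intro ε hε hε2
    obtain ⟨H, hHle, hInt⟩ := integral_decomp d hd β hβ ε hε (by linarith)
    have h2ε : (0:ℝ) < 2 - ε := by linarith
    have h32 : (3/2:ℝ) ≤ 2 - ε := by linarith
    have h2le : (2:ℝ) - ε ≤ 2 := by linarith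
    have hsd : scaleDensity d β (1 - ε)
        = ε ^ (((d:ℝ) - 3) / 2) * ((2 - ε) ^ (-(1/2:ℝ)) * (2 - ε) ^ (-α) * Real.exp (-H)) := by
      unfold scaleDensity
      rw [hInt]
      have h1 : 1 - (1 - ε) ^ 2 = ε * (2 - ε) := by ring
      rw [h1, Real.mul_rpow hε.le h2ε.le, neg_add, Real.exp_add]
      have h3 : Real.exp (-(((d:ℝ) - 2) / 2 * (Real.log (2 - ε) - Real.log ε)))
          = ε ^ α * (2 - ε) ^ (-α) := by
        rw [Real.rpow_def_of_pos hε, Real.rpow_def_of_pos h2ε, ← Real.exp_add, hα]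
        congr 1
        ring
      rw [h3]
      have h4 : ε ^ (((d:ℝ) - 3) / 2) = ε ^ (-(1/2:ℝ)) * ε ^ α := by
        rw [← Real.rpow_add hε, hα]
        congr 1
        ring
      rw [h4]
      ring
    have hHge : -M ≤ -H := by have := abs_le.mp hHle; linarith
    have hHle' : -H ≤ M := by have := abs_le.mp hHle; linarith
    have hKlo : (2:ℝ) ^ (-(1/2:ℝ)) * (2:ℝ) ^ (-α) * Real.exp (-M)
        ≤ (2 - ε) ^ (-(1/2:ℝ)) * (2 - ε) ^ (-α) * Real.exp (-H) := by
      have b1 := rpow_neg_anti' h2ε h2le (by norm_num : (0:ℝ) ≤ 1/2)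
      have b2 := rpow_neg_anti' h2ε h2le hα0
      have b3 : Real.exp (-M) ≤ Real.exp (-H) := Real.exp_le_exp.mpr hHge
      exact mul_le_mul (mul_le_mul b1 b2 (by positivity) (by positivity)) b3
        (Real.exp_pos _).le (by positivity)
    have hKhi : (2 - ε) ^ (-(1/2:ℝ)) * (2 - ε) ^ (-α) * Real.exp (-H)
        ≤ (3/2:ℝ) ^ (-(1/2:ℝ)) * (3/2:ℝ) ^ (-α) * Real.exp M := by
      have b1 := rpow_neg_anti' (by norm_num : (0:ℝ) < 3/2) h32 (by norm_num : (0:ℝ) ≤ 1/2)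
      have b2 := rpow_neg_anti' (by norm_num : (0:ℝ) < 3/2) h32 hα0
      have b3 : Real.exp (-H) ≤ Real.exp M := Real.exp_le_exp.mpr hHle'
      exact mul_le_mul (mul_le_mul b1 b2 (by positivity) (by positivity)) b3
        (Real.exp_pos _).le (by positivity)
    have hεp : (0:ℝ) ≤ ε ^ (((d:ℝ) - 3) / 2) := Real.rpow_nonneg hε.le _
    constructor
    · calc (2:ℝ) ^ (-(1/2:ℝ)) * (2:ℝ) ^ (-α) * Real.exp (-M) * ε ^ (((d:ℝ) - 3) / 2)
          = ε ^ (((d:ℝ) - 3) / 2) * ((2:ℝ) ^ (-(1/2:ℝ)) * (2:ℝ) ^ (-α) * Real.exp (-M)) := by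
            ring
        _ ≤ ε ^ (((d:ℝ) - 3) / 2)
            * ((2 - ε) ^ (-(1/2:ℝ)) * (2 - ε) ^ (-α) * Real.exp (-H)) :=
            mul_le_mul_of_nonneg_left hKlo hεp
        _ = scaleDensity d β (1 - ε) := hsd.symm
    · calc scaleDensity d β (1 - ε)
          = ε ^ (((d:ℝ) - 3) / 2)
            * ((2 - ε) ^ (-(1/2:ℝ)) * (2 - ε) ^ (-α) * Real.exp (-H)) := hsd
        _ ≤ ε ^ (((d:ℝ) - 3) / 2)
            * ((3/2:ℝ) ^ (-(1/2:ℝ)) * (3/2:ℝ) ^ (-α) * Real.exp M) :=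
            mul_le_mul_of_nonneg_left hKhi hεp
        _ = (3/2:ℝ) ^ (-(1/2:ℝ)) * (3/2:ℝ) ^ (-α) * Real.exp M * ε ^ (((d:ℝ) - 3) / 2) := by
            ring
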